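/- Let LA_P ⊂ ℝ² be the lopsided amoeba of P(z,w) = c₁z + c₂w + c₃z⁻¹ + c₄w⁻¹ + c₅ and let a = 2√(|c₁||c₃|) + 2√(|c₂||c₄|). If |c₅| > a, then the complement ℝ²∖LA_P has exactly one bounded connected component; if |c₅| ≤ a, then ℝ²∖LA_P has no bounded connected component. In other words, the genus of the lopsided amoeba equals 1 if |c₅| > a and equals 0 otherwise. -/

import Mathlib

/-- The five monomial moduli of the F₀ Newton polynomial
`P = c₁ z + c₂ w + c₃ z⁻¹ + c₄ w⁻¹ + c₅` at `(x,y) ∈ ℝ²`. -/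
noncomputable def F0mono (c₁ c₂ c₃ c₄ c₅ : ℂ) (p : ℝ × ℝ) : Fin 5 → ℝ :=
  ![‖c₁‖ * Real.exp p.1, ‖c₂‖ * Real.exp p.2,
    ‖c₃‖ * Real.exp (-p.1), ‖c₄‖ * Real.exp (-p.2),
    ‖c₅‖]

/-- The lopsided amoeba of the F₀ Newton polynomial: the points `(x,y) ∈ ℝ²`
where the list of five monomial moduli is *not* lopsided, i.e. no entry
strictly exceeds the sum of all the others. -/
noncomputable def F0lopsidedAmoeba (c₁ c₂ c₃ c₄ c₅ : ℂ) : Set (ℝ × ℝ) :=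
  {p | ∀ i : Fin 5, F0mono c₁ c₂ c₃ c₄ c₅ p i ≤
        ∑ j ∈ Finset.univ.erase i, F0mono c₁ c₂ c₃ c₄ c₅ p j}

/-!
The complement of the lopsided amoeba is the disjoint union of the five open regions where
one monomial dominates the sum of the others. Dividing by the dominant monomial shows that each
region is convex, so the region of the constant term, when nonempty, is a whole complement
component. The regions of `z, w, z⁻¹, w⁻¹` contain a ray in the direction of their exponent, so
their components are unbounded. The region of the constant term is
`{|c₁|eˣ + |c₃|e⁻ˣ + |c₂|eʸ + |c₄|e⁻ʸ < |c₅|}`: it is bounded, and by AM-GM it is nonempty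
exactly when `|c₅|` exceeds the minimum `2√(|c₁||c₃|) + 2√(|c₂||c₄|)` of the left-hand side.
-/

open Real Bornology Set Function

theorem connectedComponentIn_iUnion_eq {X ι : Type*} [TopologicalSpace X] {U : ι → Set X}
    (hU : ∀ i, IsOpen (U i)) (hdisj : Pairwise (Disjoint on U)) {k : ι}
    (hk : IsPreconnected (U k)) {x : X} (hx : x ∈ U k) :
    connectedComponentIn (⋃ i, U i) x = U k := by
  refine Subset.antisymm ?_ (hk.subset_connectedComponentIn hx (subset_iUnion U k))
  refine isPreconnected_connectedComponentIn.subset_left_of_subset_union (hU k)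
    (isOpen_biUnion fun i _ => hU i) (v := ⋃ i ∈ {i | i ≠ k}, U i)
    (disjoint_iUnion₂_right.2 fun i hik => hdisj (Ne.symm hik)) ?_
    ⟨x, mem_connectedComponentIn (mem_iUnion_of_mem k hx), hx⟩
  intro y hy
  obtain ⟨i, hi⟩ := mem_iUnion.1 (connectedComponentIn_subset _ _ hy)
  by_cases hik : i = k
  · exact Or.inl (hik ▸ hi)
  · exact Or.inr (mem_biUnion hik hi)

theorem not_isBounded_connectedComponentIn_of_ray {E : Type*} [NormedAddCommGroup E]
    [NormedSpace ℝ E] {U : Set E} {v d : E} (hd : d ≠ 0)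
    (hU : ∀ t : ℝ, 0 ≤ t → v + t • d ∈ U) :
    ¬ IsBounded (connectedComponentIn U v) := by
  have hray : (fun t : ℝ => v + t • d) '' Ici 0 ⊆ connectedComponentIn U v :=
    (isPreconnected_Ici.image _ (by fun_prop)).subset_connectedComponentIn
      ⟨0, self_mem_Ici, by simp⟩ (by rintro _ ⟨t, ht, rfl⟩; exact hU t ht)
  intro hbdd
  obtain ⟨M, hM⟩ := isBounded_iff_forall_norm_le.1 (hbdd.subset hray)
  have hd' : 0 < ‖d‖ := norm_pos_iff.2 hd
  set t := (|M| + ‖v‖ + 1) / ‖d‖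
  have ht : 0 ≤ t := by positivity
  have hfar : ‖t • d‖ = |M| + ‖v‖ + 1 := by
    rw [norm_smul, Real.norm_of_nonneg ht, div_mul_cancel₀ _ hd'.ne']
  have htriangle : ‖t • d‖ ≤ ‖v + t • d‖ + ‖v‖ := by
    simpa using norm_sub_le (v + t • d) v
  linarith [hM _ ⟨t, ht, rfl⟩, le_abs_self M]

theorem convexOn_finsetSum {E ι : Type*} [AddCommGroup E] [Module ℝ E] {s : Set E}
    (hs : Convex ℝ s) {f : ι → E → ℝ} (t : Finset ι) (hf : ∀ i ∈ t, ConvexOn ℝ s (f i)) :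
    ConvexOn ℝ s fun x => ∑ i ∈ t, f i x := by
  classical
  induction t using Finset.induction_on with
  | empty => simpa using convexOn_const (0 : ℝ) hs
  | insert i t hi ih =>
    simp_rw [Finset.sum_insert hi]
    exact (hf i (Finset.mem_insert_self i t)).add
      (ih fun j hj => hf j (Finset.mem_insert_of_mem hj))

section Lopsided

variable {X ι : Type*} [Fintype ι] [DecidableEq ι]

def dominanceRegion (t : X → ι → ℝ) (i : ι) : Set X :=
  {p | ∑ j ∈ Finset.univ.erase i, t p j < t p i}

theorem pairwise_disjoint_dominanceRegion {t : X → ι → ℝ} (ht : ∀ p, 0 ≤ t p) :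
    Pairwise (Disjoint on dominanceRegion t) := by
  intro i k hik
  refine disjoint_left.2 fun p hi hk => ?_
  have hki : t p k ≤ ∑ j ∈ Finset.univ.erase i, t p j :=
    Finset.single_le_sum (fun j _ => ht p j) (Finset.mem_erase.2 ⟨Ne.symm hik, Finset.mem_univ k⟩)
  have hik' : t p i ≤ ∑ j ∈ Finset.univ.erase k, t p j :=
    Finset.single_le_sum (fun j _ => ht p j) (Finset.mem_erase.2 ⟨hik, Finset.mem_univ i⟩)
  simp only [dominanceRegion, mem_ofPred_eq] at hi hk
  linarith

theorem isOpen_dominanceRegion [TopologicalSpace X] {t : X → ι → ℝ}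
    (ht : ∀ j, Continuous fun p => t p j) (i : ι) : IsOpen (dominanceRegion t i) :=
  isOpen_lt (continuous_finsetSum _ fun j _ => ht j) (ht i)

end Lopsided

section Monomials

variable {E ι : Type*} [AddCommGroup E] [Module ℝ E]

noncomputable def monomialModuli (a : ι → ℝ) (α : ι → E →ₗ[ℝ] ℝ) (p : E) (i : ι) : ℝ :=
  a i * exp (α i p)

variable {a : ι → ℝ} {α : ι → E →ₗ[ℝ] ℝ}

theorem monomialModuli_nonneg (ha : 0 ≤ a) (p : E) : 0 ≤ monomialModuli a α p :=
  fun i => mul_nonneg (ha i) (exp_pos _).le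

variable [Fintype ι] [DecidableEq ι]

theorem mem_dominanceRegion_monomialModuli_iff {p : E} {i : ι} :
    p ∈ dominanceRegion (monomialModuli a α) i ↔
      ∑ j ∈ Finset.univ.erase i, a j * exp ((α j - α i) p) < a i := by
  simp only [dominanceRegion, monomialModuli, mem_ofPred_eq, LinearMap.sub_apply, exp_sub,
    mul_div_assoc', ← Finset.sum_div, div_lt_iff₀ (exp_pos _)]

theorem convex_dominanceRegion_monomialModuli (ha : 0 ≤ a) (i : ι) :
    Convex ℝ (dominanceRegion (monomialModuli a α) i) := by
  have hconv : ConvexOn ℝ univ fun p => ∑ j ∈ Finset.univ.erase i, a j * exp ((α j - α i) p) :=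
    convexOn_finsetSum convex_univ _ fun j _ =>
      (convexOn_exp.comp_linearMap (α j - α i)).smul (ha j)
  convert hconv.convex_lt (a i) using 1
  ext p
  simp [mem_dominanceRegion_monomialModuli_iff]

/-- Moving in a direction `d` that maximises `α i d` among all exponents multiplies the
`i`-th monomial by at least as much as any other one. -/
theorem add_smul_mem_dominanceRegion_monomialModuli (ha : 0 ≤ a) {i : ι} {d : E}
    (hd : ∀ j, α j d ≤ α i d) {p : E} (hp : p ∈ dominanceRegion (monomialModuli a α) i)
    {t : ℝ} (ht : 0 ≤ t) : p + t • d ∈ dominanceRegion (monomialModuli a α) i := by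
  rw [mem_dominanceRegion_monomialModuli_iff] at hp ⊢
  calc ∑ j ∈ Finset.univ.erase i, a j * exp ((α j - α i) (p + t • d))
      ≤ ∑ j ∈ Finset.univ.erase i, a j * exp ((α j - α i) p) := by
        refine Finset.sum_le_sum fun j _ => mul_le_mul_of_nonneg_left ?_ (ha j)
        simp only [map_add, map_smul, LinearMap.sub_apply, smul_eq_mul, exp_le_exp]
        nlinarith [hd j]
    _ < a i := hp

end Monomials

section ExpPair

variable {A C : ℝ}

theorem isLeast_mul_exp_add_mul_exp_neg (hA : 0 < A) (hC : 0 < C) :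
    IsLeast (range fun x => A * exp x + C * exp (-x)) (2 * √(A * C)) := by
  refine ⟨⟨log √C - log √A, ?_⟩, ?_⟩
  · have hsA := sqrt_pos.2 hA
    have hsC := sqrt_pos.2 hC
    simp only [exp_sub, exp_neg, exp_log hsA, exp_log hsC, sqrt_mul hA.le]
    nth_rewrite 1 [← sq_sqrt hA.le]
    nth_rewrite 2 [← sq_sqrt hC.le]
    field_simp
    ring
  · rintro _ ⟨x, rfl⟩
    have hprod : A * exp x * (C * exp (-x)) = A * C := by
      rw [exp_neg]; field_simp
    have hAx : 0 ≤ A * exp x := by positivity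
    have hCx : 0 ≤ C * exp (-x) := by positivity
    calc 2 * √(A * C) = 2 * √(A * exp x) * √(C * exp (-x)) := by
          rw [mul_assoc, ← sqrt_mul hAx, hprod]
      _ ≤ √(A * exp x) ^ 2 + √(C * exp (-x)) ^ 2 := two_mul_le_add_sq _ _
      _ = A * exp x + C * exp (-x) := by rw [sq_sqrt hAx, sq_sqrt hCx]

theorem mem_Ioo_of_mul_exp_add_mul_exp_neg_lt (hA : 0 < A) (hC : 0 < C) {x M : ℝ}
    (h : A * exp x + C * exp (-x) < M) : x ∈ Ioo (-log (M / C)) (log (M / A)) := by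
  have hAx := mul_pos hA (exp_pos x)
  have hCx := mul_pos hC (exp_pos (-x))
  have hM : 0 < M := by linarith
  constructor
  · rw [neg_lt, lt_log_iff_exp_lt (by positivity), lt_div_iff₀ hC]
    linarith
  · rw [lt_log_iff_exp_lt (by positivity), lt_div_iff₀ hA]
    linarith

end ExpPair

section F0

def F0exponent : Fin 5 → (ℝ × ℝ →ₗ[ℝ] ℝ) :=
  ![LinearMap.fst ℝ ℝ ℝ, LinearMap.snd ℝ ℝ ℝ, -LinearMap.fst ℝ ℝ ℝ, -LinearMap.snd ℝ ℝ ℝ, 0]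

def F0direction : Fin 5 → ℝ × ℝ :=
  ![(1, 0), (0, 1), (-1, 0), (0, -1), 0]

theorem F0exponent_direction_le (i j : Fin 5) :
    F0exponent j (F0direction i) ≤ F0exponent i (F0direction i) := by
  fin_cases i <;> fin_cases j <;> norm_num [F0exponent, F0direction]

theorem F0direction_ne_zero {i : Fin 5} (hi : i ≠ 4) : F0direction i ≠ 0 := by
  fin_cases i <;> simp_all [F0direction]

variable {c₁ c₂ c₃ c₄ c₅ : ℂ}

theorem F0coeff_nonneg : 0 ≤ (![‖c₁‖, ‖c₂‖, ‖c₃‖, ‖c₄‖, ‖c₅‖] : Fin 5 → ℝ) := by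
  intro i
  fin_cases i <;> simp

theorem F0mono_eq_monomialModuli :
    F0mono c₁ c₂ c₃ c₄ c₅ = monomialModuli ![‖c₁‖, ‖c₂‖, ‖c₃‖, ‖c₄‖, ‖c₅‖] F0exponent := by
  funext p i
  fin_cases i <;> simp [F0mono, monomialModuli, F0exponent]

theorem continuous_F0mono (i : Fin 5) : Continuous fun p => F0mono c₁ c₂ c₃ c₄ c₅ p i := by
  fin_cases i <;> simp only [F0mono] <;> fun_prop

theorem compl_F0lopsidedAmoeba :
    (F0lopsidedAmoeba c₁ c₂ c₃ c₄ c₅)ᶜ = ⋃ i, dominanceRegion (F0mono c₁ c₂ c₃ c₄ c₅) i := by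
  ext p
  simp [F0lopsidedAmoeba, dominanceRegion]

theorem not_isBounded_connectedComponentIn_F0 {i : Fin 5} (hi : i ≠ 4) {v : ℝ × ℝ}
    (hv : v ∈ dominanceRegion (F0mono c₁ c₂ c₃ c₄ c₅) i) :
    ¬ IsBounded (connectedComponentIn (F0lopsidedAmoeba c₁ c₂ c₃ c₄ c₅)ᶜ v) := by
  refine not_isBounded_connectedComponentIn_of_ray (F0direction_ne_zero hi) fun t ht => ?_
  rw [F0mono_eq_monomialModuli] at hv
  rw [compl_F0lopsidedAmoeba, F0mono_eq_monomialModuli]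
  exact mem_iUnion_of_mem i <|
    add_smul_mem_dominanceRegion_monomialModuli F0coeff_nonneg (F0exponent_direction_le i) hv ht

theorem connectedComponentIn_F0_eq {v : ℝ × ℝ}
    (hv : v ∈ dominanceRegion (F0mono c₁ c₂ c₃ c₄ c₅) 4) :
    connectedComponentIn (F0lopsidedAmoeba c₁ c₂ c₃ c₄ c₅)ᶜ v =
      dominanceRegion (F0mono c₁ c₂ c₃ c₄ c₅) 4 := by
  rw [compl_F0lopsidedAmoeba]
  refine connectedComponentIn_iUnion_eq (isOpen_dominanceRegion continuous_F0mono)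
    (pairwise_disjoint_dominanceRegion fun p => ?_) ?_ hv
  · rw [F0mono_eq_monomialModuli]
    exact monomialModuli_nonneg F0coeff_nonneg p
  · rw [F0mono_eq_monomialModuli]
    exact (convex_dominanceRegion_monomialModuli F0coeff_nonneg 4).isPreconnected

theorem mem_F0dominanceRegion_four_iff {p : ℝ × ℝ} :
    p ∈ dominanceRegion (F0mono c₁ c₂ c₃ c₄ c₅) 4 ↔
      ‖c₁‖ * exp p.1 + ‖c₃‖ * exp (-p.1) + (‖c₂‖ * exp p.2 + ‖c₄‖ * exp (-p.2)) < ‖c₅‖ := by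
  rw [dominanceRegion, mem_ofPred_eq, Finset.sum_erase_eq_sub (Finset.mem_univ 4),
    Fin.sum_univ_five]
  simp only [F0mono, Fin.isValue, Matrix.cons_val_zero, Matrix.cons_val_one, Matrix.cons_val,
    add_sub_cancel_right]
  constructor <;> intro h <;> linarith

theorem isBounded_F0dominanceRegion_four (h₁ : c₁ ≠ 0) (h₂ : c₂ ≠ 0) (h₃ : c₃ ≠ 0)
    (h₄ : c₄ ≠ 0) :
    IsBounded (dominanceRegion (F0mono c₁ c₂ c₃ c₄ c₅) 4) := by
  refine ((Metric.isBounded_Ioo (-log (‖c₅‖ / ‖c₃‖)) (log (‖c₅‖ / ‖c₁‖))).prod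
    (Metric.isBounded_Ioo (-log (‖c₅‖ / ‖c₄‖)) (log (‖c₅‖ / ‖c₂‖)))).subset fun p hp => ?_
  rw [mem_F0dominanceRegion_four_iff] at hp
  have hx_pos := add_pos (mul_pos (norm_pos_iff.2 h₁) (exp_pos p.1))
    (mul_pos (norm_pos_iff.2 h₃) (exp_pos (-p.1)))
  have hy_pos := add_pos (mul_pos (norm_pos_iff.2 h₂) (exp_pos p.2))
    (mul_pos (norm_pos_iff.2 h₄) (exp_pos (-p.2)))
  exact ⟨mem_Ioo_of_mul_exp_add_mul_exp_neg_lt (norm_pos_iff.2 h₁) (norm_pos_iff.2 h₃)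
      (by linarith),
    mem_Ioo_of_mul_exp_add_mul_exp_neg_lt (norm_pos_iff.2 h₂) (norm_pos_iff.2 h₄)
      (by linarith)⟩

theorem F0dominanceRegion_four_nonempty_iff (h₁ : c₁ ≠ 0) (h₂ : c₂ ≠ 0) (h₃ : c₃ ≠ 0)
    (h₄ : c₄ ≠ 0) :
    (dominanceRegion (F0mono c₁ c₂ c₃ c₄ c₅) 4).Nonempty ↔
      2 * √(‖c₁‖ * ‖c₃‖) + 2 * √(‖c₂‖ * ‖c₄‖) < ‖c₅‖ := by
  have hx := isLeast_mul_exp_add_mul_exp_neg (norm_pos_iff.2 h₁) (norm_pos_iff.2 h₃)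
  have hy := isLeast_mul_exp_add_mul_exp_neg (norm_pos_iff.2 h₂) (norm_pos_iff.2 h₄)
  constructor
  · rintro ⟨p, hp⟩
    rw [mem_F0dominanceRegion_four_iff] at hp
    linarith [hx.2 ⟨p.1, rfl⟩, hy.2 ⟨p.2, rfl⟩]
  · intro h
    obtain ⟨x, hx_min⟩ := hx.1
    obtain ⟨y, hy_min⟩ := hy.1
    exact ⟨(x, y), mem_F0dominanceRegion_four_iff.2 (by simp only at hx_min hy_min; linarith)⟩

theorem F0_boundedComponents_eq (h₁ : c₁ ≠ 0) (h₂ : c₂ ≠ 0) (h₃ : c₃ ≠ 0) (h₄ : c₄ ≠ 0) :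
    {C : Set (ℝ × ℝ) | ∃ v ∈ (F0lopsidedAmoeba c₁ c₂ c₃ c₄ c₅)ᶜ,
        C = connectedComponentIn (F0lopsidedAmoeba c₁ c₂ c₃ c₄ c₅)ᶜ v ∧ IsBounded C} =
      (fun _ => dominanceRegion (F0mono c₁ c₂ c₃ c₄ c₅) 4) ''
        dominanceRegion (F0mono c₁ c₂ c₃ c₄ c₅) 4 := by
  ext C
  constructor
  · rintro ⟨v, hv, rfl, hbdd⟩
    rw [compl_F0lopsidedAmoeba] at hv
    obtain ⟨i, hvi⟩ := mem_iUnion.1 hv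
    by_cases hi : i = 4
    · subst hi
      exact ⟨v, hvi, (connectedComponentIn_F0_eq hvi).symm⟩
    · exact absurd hbdd (not_isBounded_connectedComponentIn_F0 hi hvi)
  · rintro ⟨v, hv, rfl⟩
    refine ⟨v, ?_, (connectedComponentIn_F0_eq hv).symm,
      isBounded_F0dominanceRegion_four h₁ h₂ h₃ h₄⟩
    rw [compl_F0lopsidedAmoeba]
    exact mem_iUnion_of_mem 4 hv

end F0

theorem F0_lopsided_amoeba_genus_general
    (c₁ c₂ c₃ c₄ c₅ : ℂ) (h₁ : c₁ ≠ 0) (h₂ : c₂ ≠ 0) (h₃ : c₃ ≠ 0)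
    (h₄ : c₄ ≠ 0) :
    (2 * Real.sqrt (‖c₁‖ * ‖c₃‖) +
        2 * Real.sqrt (‖c₂‖ * ‖c₄‖) < ‖c₅‖ →
      {C : Set (ℝ × ℝ) | ∃ v ∈ (F0lopsidedAmoeba c₁ c₂ c₃ c₄ c₅)ᶜ,
        C = connectedComponentIn (F0lopsidedAmoeba c₁ c₂ c₃ c₄ c₅)ᶜ v ∧
        Bornology.IsBounded C}.ncard = 1) ∧
    (‖c₅‖ ≤ 2 * Real.sqrt (‖c₁‖ * ‖c₃‖) +
        2 * Real.sqrt (‖c₂‖ * ‖c₄‖) →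
      {C : Set (ℝ × ℝ) | ∃ v ∈ (F0lopsidedAmoeba c₁ c₂ c₃ c₄ c₅)ᶜ,
        C = connectedComponentIn (F0lopsidedAmoeba c₁ c₂ c₃ c₄ c₅)ᶜ v ∧
        Bornology.IsBounded C} = ∅) := by
  have hiff := F0dominanceRegion_four_nonempty_iff (c₅ := c₅) h₁ h₂ h₃ h₄
  rw [F0_boundedComponents_eq h₁ h₂ h₃ h₄]
  refine ⟨fun h => ?_, fun h => ?_⟩
  · rw [(hiff.2 h).image_const, ncard_singleton]
  · rw [image_eq_empty, ← not_nonempty_iff_eq_empty, hiff]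
    exact h.not_gt

/-- The genus of the lopsided amoeba of F₀ is 1 if `|c₅| > a` and 0 otherwise,
where `a = 2√(|c₁||c₃|) + 2√(|c₂||c₄|)`: the complement of the lopsided amoeba
has exactly one bounded connected component when `|c₅| > a`, and none when
`|c₅| ≤ a`. -/
theorem F0_lopsided_amoeba_genus
    (c₁ c₂ c₃ c₄ c₅ : ℂ) (h₁ : c₁ ≠ 0) (h₂ : c₂ ≠ 0) (h₃ : c₃ ≠ 0)
    (h₄ : c₄ ≠ 0) (h₅ : c₅ ≠ 0) :
    (2 * Real.sqrt (‖c₁‖ * ‖c₃‖) +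
        2 * Real.sqrt (‖c₂‖ * ‖c₄‖) < ‖c₅‖ →
      {C : Set (ℝ × ℝ) | ∃ v ∈ (F0lopsidedAmoeba c₁ c₂ c₃ c₄ c₅)ᶜ,
        C = connectedComponentIn (F0lopsidedAmoeba c₁ c₂ c₃ c₄ c₅)ᶜ v ∧
        Bornology.IsBounded C}.ncard = 1) ∧
    (‖c₅‖ ≤ 2 * Real.sqrt (‖c₁‖ * ‖c₃‖) +
        2 * Real.sqrt (‖c₂‖ * ‖c₄‖) →
      {C : Set (ℝ × ℝ) | ∃ v ∈ (F0lopsidedAmoeba c₁ c₂ c₃ c₄ c₅)ᶜ,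
        C = connectedComponentIn (F0lopsidedAmoeba c₁ c₂ c₃ c₄ c₅)ᶜ v ∧
        Bornology.IsBounded C} = ∅) :=
  F0_lopsided_amoeba_genus_general c₁ c₂ c₃ c₄ c₅ h₁ h₂ h₃ h₄
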